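/- arXiv:2104.04301 — 3 statements merged into one kernel-verified Lean document; each statement's English description precedes it below -/
import Mathlib

section
/- If r = 0 (no reinfection) and R₀ = βλ/(μ(σ+μ)) > 1, then the SIQR system admits an equilibrium with I* = μ(R₀ - 1)/β > 0, S* = (σ+μ)/β, Q* = σI*/(θ+μ), and R* = θQ*/μ, and all four coordinates are positive. -/
/-! At the endemic point `β S* = σ + μ`, so the infected equation balances for every `I`;
the value of `I*` is then forced by the susceptible equation, since
`(σ + μ) I* = μ (σ + μ) (R₀ - 1) / β = λ - μ S*`. The quarantined and removed
equations are linear and are solved by `Q*` and `R*` directly. -/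

namespace SIQR

/-- Reinfection rate `r = 0`. -/
def IsEquilibrium (lam β μ σ θ S I Q R : ℝ) : Prop :=
  lam - β * S * I - μ * S = 0 ∧
  β * S * I - σ * I - μ * I = 0 ∧
  σ * I - θ * Q - μ * Q = 0 ∧
  θ * Q - μ * R = 0

variable {lam β μ σ θ : ℝ}

lemma susceptible_balance (hβ : β ≠ 0) (hμ : μ ≠ 0) (hσμ : σ + μ ≠ 0) :
    lam - β * ((σ + μ) / β) * (μ * (β * lam / (μ * (σ + μ)) - 1) / β)
      - μ * ((σ + μ) / β) = 0 := by
  field_simp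
  ring

lemma infected_balance (hβ : β ≠ 0) (I : ℝ) :
    β * ((σ + μ) / β) * I - σ * I - μ * I = 0 := by
  rw [mul_div_cancel₀ _ hβ]
  ring

lemma quarantined_balance (hθμ : θ + μ ≠ 0) (I : ℝ) :
    σ * I - θ * (σ * I / (θ + μ)) - μ * (σ * I / (θ + μ)) = 0 := by
  rw [sub_sub, ← add_mul, mul_div_cancel₀ _ hθμ, sub_self]

lemma removed_balance (hμ : μ ≠ 0) (Q : ℝ) : θ * Q - μ * (θ * Q / μ) = 0 := by
  rw [mul_div_cancel₀ _ hμ, sub_self]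

theorem isEquilibrium_endemic (hβ : β ≠ 0) (hμ : μ ≠ 0) (hσμ : σ + μ ≠ 0)
    (hθμ : θ + μ ≠ 0) :
    let I := μ * (β * lam / (μ * (σ + μ)) - 1) / β
    let Q := σ * I / (θ + μ)
    IsEquilibrium lam β μ σ θ ((σ + μ) / β) I Q (θ * Q / μ) :=
  ⟨susceptible_balance hβ hμ hσμ, infected_balance hβ _, quarantined_balance hθμ _,
    removed_balance hμ _⟩

end SIQR

theorem stmt_17_general (lam β μ σ θ : ℝ)
    (hβ : 0 < β) (hμ : 0 < μ) (hσ : 0 < σ) (hθ : 0 < θ)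
    (R0 : ℝ) (hR0def : R0 = β * lam / (μ * (σ + μ))) (hR0 : 1 < R0)
    (Istar Sstar Qstar Rstar : ℝ)
    (hIs : Istar = μ * (R0 - 1) / β)
    (hSs : Sstar = (σ + μ) / β)
    (hQs : Qstar = σ * Istar / (θ + μ))
    (hRs : Rstar = θ * Qstar / μ) :
    (0 < Sstar ∧ 0 < Istar ∧ 0 < Qstar ∧ 0 < Rstar) ∧
    (lam - β * Sstar * Istar - μ * Sstar = 0) ∧
    (β * Sstar * Istar - σ * Istar - μ * Istar = 0) ∧
    (σ * Istar - θ * Qstar - μ * Qstar = 0) ∧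
    (θ * Qstar - μ * Rstar = 0) := by
  have hI : 0 < Istar := hIs ▸ div_pos (mul_pos hμ (sub_pos.mpr hR0)) hβ
  have hQ : 0 < Qstar := by rw [hQs]; positivity
  refine ⟨⟨by rw [hSs]; positivity, hI, hQ, by rw [hRs]; positivity⟩, ?_⟩
  subst hIs hSs hQs hRs hR0def
  exact SIQR.isEquilibrium_endemic hβ.ne' hμ.ne' (by positivity) (by positivity)

/-- With no reinfection (r = 0) and R₀ > 1, the SIQR system has a positive
endemic equilibrium with the stated coordinates. -/
theorem stmt_17 (lam β μ σ θ : ℝ)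
    (hlam : 0 < lam) (hβ : 0 < β) (hμ : 0 < μ) (hσ : 0 < σ) (hθ : 0 < θ)
    (R0 : ℝ) (hR0def : R0 = β * lam / (μ * (σ + μ))) (hR0 : 1 < R0)
    (Istar Sstar Qstar Rstar : ℝ)
    (hIs : Istar = μ * (R0 - 1) / β)
    (hSs : Sstar = (σ + μ) / β)
    (hQs : Qstar = σ * Istar / (θ + μ))
    (hRs : Rstar = θ * Qstar / μ) :
    (0 < Sstar ∧ 0 < Istar ∧ 0 < Qstar ∧ 0 < Rstar) ∧
    (lam - β * Sstar * Istar - μ * Sstar = 0) ∧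
    (β * Sstar * Istar - σ * Istar - μ * Istar = 0) ∧
    (σ * Istar - θ * Qstar - μ * Qstar = 0) ∧
    (θ * Qstar - μ * Rstar = 0) :=
  stmt_17_general lam β μ σ θ hβ hμ hσ hθ R0 hR0def hR0 Istar Sstar Qstar Rstar hIs hSs hQs hRs
end

section
/- If R₀ = βλ/(μ(σ+μ)) ≤ 1 and r = 0, then any equilibrium (S,I,Q,R) of the SIQR system lying in the nonnegative orthant must have I = 0, i.e., the disease-free equilibrium is the only nonnegative equilibrium. -/
/-- If R₀ ≤ 1 and r = 0, any nonnegative equilibrium has I = 0. -/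
theorem stmt_18 (lam β μ σ θ : ℝ)
    (hlam : 0 < lam) (hβ : 0 < β) (hμ : 0 < μ) (hσ : 0 < σ) (hθ : 0 < θ)
    (hR0 : β * lam / (μ * (σ + μ)) ≤ 1)
    (S I Q R : ℝ) (hS : 0 ≤ S) (hI : 0 ≤ I) (hQ : 0 ≤ Q) (hR : 0 ≤ R)
    (e1 : lam - β * S * I - μ * S = 0)
    (e2 : β * S * I - σ * I - μ * I = 0)
    (e3 : σ * I - θ * Q - μ * Q = 0)
    (e4 : θ * Q - μ * R = 0) :
    I = 0 := by
  have hden : 0 < μ * (σ + μ) := by positivity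
  have hR0' : β * lam ≤ μ * (σ + μ) := by
    rwa [div_le_one hden] at hR0
  by_contra h
  have hIpos : 0 < I := hI.lt_of_ne (Ne.symm h)
  have hBS : β * S = σ + μ := by
    have h2 : (β * S - (σ + μ)) * I = 0 := by ring_nf; nlinarith
    have := mul_eq_zero.mp h2
    rcases this with h3 | h3
    · linarith
    · exact absurd h3 (ne_of_gt hIpos)
  nlinarith [mul_pos hβ hIpos, mul_pos (mul_pos hβ hIpos) (add_pos hσ hμ)]
end

section
/- If a differentiable function I : [0,∞) → ℝ satisfies I' = βSI + rRI - σI - μI with S(t) ≤ λ/μ and R(t) ≤ λ/μ for all t, and βλ/μ + rλ/μ < σ + μ, then I(t) ≤ I(0)·e^{-ct} for c = σ + μ - (β+r)λ/μ > 0; in particular I(t) → 0 as t → ∞ when I(0) ≥ 0. -/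
/-!
Bounding `S` and `R` by `λ/μ` turns the equation for `I` into the linear differential inequality
`I' ≤ -c I` on `[0, ∞)` (this uses `I ≥ 0`), and Grönwall's inequality then gives
`I t ≤ I 0 * exp (-c t)`; for `c > 0` the right-hand side tends to `0`, squeezing `I`.
-/

open Filter Real Set

theorem le_mul_exp_of_deriv_le_mul {f : ℝ → ℝ} {K : ℝ}
    (hf : ∀ t, 0 ≤ t → DifferentiableAt ℝ f t) (hbound : ∀ t, 0 ≤ t → deriv f t ≤ K * f t)
    {t : ℝ} (ht : 0 ≤ t) : f t ≤ f 0 * exp (K * t) := by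
  have hcont : ContinuousOn f (Icc 0 t) := fun x hx => (hf x hx.1).continuousAt.continuousWithinAt
  have := le_gronwallBound_of_liminf_deriv_right_le (ε := 0) hcont
    (fun x hx _ hr => (hf x hx.1).hasDerivAt.hasDerivWithinAt.liminf_right_slope_le hr)
    le_rfl (fun x hx => by simpa using hbound x hx.1) t ⟨ht, le_rfl⟩
  simpa [gronwallBound_ε0] using this

theorem tendsto_zero_of_nonneg_of_le_mul_exp {f : ℝ → ℝ} {c : ℝ} (hc : 0 < c)
    (hnonneg : ∀ t, 0 ≤ t → 0 ≤ f t) (hle : ∀ t, 0 ≤ t → f t ≤ f 0 * exp (-c * t)) :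
    Tendsto f atTop (nhds 0) := by
  have hexp : Tendsto (fun t => f 0 * exp (-c * t)) atTop (nhds 0) := by
    simpa using (tendsto_exp_atBot.comp
      (tendsto_id.const_mul_atTop_of_neg (neg_neg_iff_pos.mpr hc))).const_mul (f 0)
  refine tendsto_of_tendsto_of_tendsto_of_le_of_le' tendsto_const_nhds hexp ?_ ?_ <;>
    filter_upwards [eventually_ge_atTop 0] with t ht
  exacts [hnonneg t ht, hle t ht]

theorem infection_rate_le {β r σ μ M s ρ x : ℝ} (hβ : 0 ≤ β) (hr : 0 ≤ r) (hx : 0 ≤ x)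
    (hs : s ≤ M) (hρ : ρ ≤ M) :
    β * s * x + r * ρ * x - σ * x - μ * x ≤ -(σ + μ - (β + r) * M) * x := by
  have hβs : β * s * x ≤ β * M * x := by gcongr
  have hrρ : r * ρ * x ≤ r * M * x := by gcongr
  linarith

theorem stmt_19_general (lam β μ r σ : ℝ)
    (hβ : 0 < β) (hr : 0 < r)
    (I S R : ℝ → ℝ)
    (hId : ∀ t, 0 ≤ t → DifferentiableAt ℝ I t)
    (hInn : ∀ t, 0 ≤ t → 0 ≤ I t)
    (hSb : ∀ t, 0 ≤ t → S t ≤ lam / μ)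
    (hRb : ∀ t, 0 ≤ t → R t ≤ lam / μ)
    (hI : ∀ t, 0 ≤ t →
      deriv I t = β * S t * I t + r * R t * I t - σ * I t - μ * I t)
    (hsmall : β * lam / μ + r * lam / μ < σ + μ)
    (c : ℝ) (hc : c = σ + μ - (β + r) * lam / μ) :
    0 < c ∧ (∀ t, 0 ≤ t → I t ≤ I 0 * Real.exp (-c * t)) ∧
    (0 ≤ I 0 → Tendsto I atTop (nhds 0)) := by
  have hcpos : 0 < c := by
    rw [hc, add_mul, add_div]
    linarith
  have hderiv : ∀ t, 0 ≤ t → deriv I t ≤ -c * I t := fun t ht => by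
    rw [hI t ht, hc, mul_div_assoc]
    exact infection_rate_le hβ.le hr.le (hInn t ht) (hSb t ht) (hRb t ht)
  have hdecay : ∀ t, 0 ≤ t → I t ≤ I 0 * exp (-c * t) :=
    fun t ht => le_mul_exp_of_deriv_le_mul hId hderiv ht
  exact ⟨hcpos, hdecay, fun _ => tendsto_zero_of_nonneg_of_le_mul_exp hcpos hInn hdecay⟩

/-- If S, R stay below λ/μ and (β+r)λ/μ < σ + μ, then I decays exponentially
with rate c = σ + μ - (β+r)λ/μ > 0, and I(t) → 0 when I(0) ≥ 0. -/
theorem stmt_19 (lam β μ r σ : ℝ)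
    (hlam : 0 < lam) (hβ : 0 < β) (hμ : 0 < μ) (hr : 0 < r) (hσ : 0 < σ)
    (I S R : ℝ → ℝ)
    (hId : ∀ t, 0 ≤ t → DifferentiableAt ℝ I t)
    (hInn : ∀ t, 0 ≤ t → 0 ≤ I t)
    (hSb : ∀ t, 0 ≤ t → S t ≤ lam / μ)
    (hRb : ∀ t, 0 ≤ t → R t ≤ lam / μ)
    (hI : ∀ t, 0 ≤ t →
      deriv I t = β * S t * I t + r * R t * I t - σ * I t - μ * I t)
    (hsmall : β * lam / μ + r * lam / μ < σ + μ)
    (c : ℝ) (hc : c = σ + μ - (β + r) * lam / μ) :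
    0 < c ∧ (∀ t, 0 ≤ t → I t ≤ I 0 * Real.exp (-c * t)) ∧
    (0 ≤ I 0 → Tendsto I atTop (nhds 0)) :=
  stmt_19_general lam β μ r σ hβ hr I S R hId hInn hSb hRb hI hsmall c hc
end
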